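/- Fix $4\le r\le 7$ and let $d=9-r$. Under the orthogonal decomposition $N_r\otimes\mathbb{R} = \mathbb{R}K_r \oplus (K_r^\perp\otimes\mathbb{R})$, the exceptional classes in $N_r$ are exactly the elements $-\tfrac{1}{d}K_r + x$ where $x$ ranges over the Weyl group orbit $W\omega$ of the fundamental weight $\omega$ dual to the simple root $\beta_{r-1}=-\ell_{r-1}+\ell_r$ of the root system in $K_r^\perp$. -/

import Mathlib

/-!
Translation by `-(1/d) K_r` commutes with every reflection, since roots are orthogonal to `K_r`,
and takes `ω` to `ℓ_r`; so it suffices to show that the exceptional classes form the Weyl orbit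
of `ℓ_r`. Reflections preserve integrality, `(e, e)` and `(e, K_r)`, so the orbit consists of
exceptional classes. Conversely, write an exceptional class as `e = a h + ∑ gᵢ ℓᵢ`, so that
`∑ gᵢ² = a² + 1` and `∑ gᵢ = 1 - 3a`. For `r ≤ 7`, Cauchy–Schwarz gives `a ≥ 0`. If `a = 0` then
`e = ℓ_q`, the reflection of `ℓ_r` in `ℓ_r - ℓ_q`. If `a > 0`, the three smallest `gᵢ, gⱼ, gₖ`
satisfy `a + gᵢ + gⱼ + gₖ < 0`, and the reflection in `h - ℓᵢ - ℓⱼ - ℓₖ` lowers the degree `a`.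
-/

/-- The bilinear form of `N_r`, extended to `N_r ⊗ ℝ`. -/
def NformR (r : ℕ) (x y : Fin (r + 1) → ℝ) : ℝ :=
  ∑ i : Fin (r + 1), if i = 0 then x i * y i else -(x i * y i)

/-- `K_r ∈ N_r ⊗ ℝ`. -/
def KvecR (r : ℕ) : Fin (r + 1) → ℝ := fun i => if i = 0 then -3 else 1

/-- Integrality: membership in the lattice `N_r ⊂ N_r ⊗ ℝ`. -/
def IsIntegralVec (r : ℕ) (x : Fin (r + 1) → ℝ) : Prop := ∀ i, ∃ n : ℤ, x i = n

/-- The roots: lattice elements of `K_r^⊥` of square `-2`. -/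
def RootsR (r : ℕ) : Set (Fin (r + 1) → ℝ) :=
  {b | IsIntegralVec r b ∧ NformR r b (KvecR r) = 0 ∧ NformR r b b = -2}

/-- The reflection in a root `β` (note `(β,β) = -2`): `s_β(v) = v + (β,v)β`. -/
noncomputable def reflectR (r : ℕ) (b v : Fin (r + 1) → ℝ) : Fin (r + 1) → ℝ :=
  v + NformR r b v • b

/-- The orbit of `ω` under the Weyl group `W` generated by the reflections in
the roots: the smallest set containing `ω` and stable under all reflections. -/
def WOrbit (r : ℕ) (ω : Fin (r + 1) → ℝ) : Set (Fin (r + 1) → ℝ) :=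
  ⋂₀ {S | ω ∈ S ∧ ∀ b ∈ RootsR r, ∀ v ∈ S, reflectR r b v ∈ S}

/-- The fundamental weight `ω` dual to the simple root `β_{r-1} = -ℓ_{r-1}+ℓ_r`:
the orthogonal projection of `ℓ_r` to `K_r^⊥ ⊗ ℝ`, namely `ℓ_r + (1/d)K_r`. -/
noncomputable def omegaR (r : ℕ) : Fin (r + 1) → ℝ :=
  (fun i => if i = Fin.last r then 1 else 0) + (1 / (9 - (r : ℝ))) • KvecR r

open Finset

section Arithmetic

variable {ι : Type*} [Fintype ι] {a : ℤ} {g : ι → ℤ}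

theorem degree_nonneg_of_sum_sq_of_sum (hcard : Fintype.card ι ≤ 7)
    (hsq : ∑ i, g i ^ 2 = a ^ 2 + 1) (hsum : ∑ i, g i = 1 - 3 * a) : 0 ≤ a := by
  have hcs := sq_sum_le_card_mul_sum_sq (s := univ) (f := g)
  rw [hsq, hsum, card_univ] at hcs
  have : (Fintype.card ι : ℤ) ≤ 7 := by exact_mod_cast hcard
  nlinarith

theorem exists_eq_single_of_sum_sq_of_sum [DecidableEq ι] (hsq : ∑ i, g i ^ 2 = 1)
    (hsum : ∑ i, g i = 1) :
    ∃ q, g = Pi.single q 1 := by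
  obtain ⟨q, -, hq⟩ := exists_ne_zero_of_sum_ne_zero (hsum.trans_ne one_ne_zero)
  have hrest : ∑ i ∈ univ.erase q, g i ^ 2 = 0 := by
    have := add_sum_erase univ (fun i => g i ^ 2) (mem_univ q)
    have := sum_nonneg fun i (_ : i ∈ univ.erase q) => sq_nonneg (g i)
    have : 0 < g q ^ 2 := by positivity
    omega
  have hzero : ∀ i ≠ q, g i = 0 := fun i hi =>
    pow_eq_zero_iff two_ne_zero |>.1 <|
      (sum_eq_zero_iff_of_nonneg fun i _ => sq_nonneg (g i)).1 hrest i
        (mem_erase.2 ⟨hi, mem_univ i⟩)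
  have hgq : g q = 1 := by rwa [sum_eq_single q (fun i _ hi => hzero i hi) (by simp)] at hsum
  refine ⟨q, funext fun i => ?_⟩
  by_cases hi : i = q
  · subst hi; simp [hgq]
  · simp [hi, hzero i hi]

/-- The three smallest entries `g i ≤ g j ≤ g k` already make `a + g i + g j + g k` negative:
the remaining at most four entries are `≥ g k`, and `3 g k ≥ g i + g j + g k`. -/
theorem exists_three_add_neg_of_sum (hcard3 : 3 ≤ Fintype.card ι) (hcard : Fintype.card ι ≤ 7)
    (ha : 1 ≤ a) (hsum : ∑ i, g i = 1 - 3 * a) :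
    ∃ i j k, i ≠ j ∧ i ≠ k ∧ j ≠ k ∧ a + g i + g j + g k < 0 := by
  classical
  have hne : ∀ s : Finset ι, Fintype.card ι - 3 < s.card → s.Nonempty := fun s hs =>
    card_pos.1 (by omega)
  obtain ⟨i, -, hi⟩ := exists_min_image univ g (hne _ (by rw [card_univ]; omega))
  obtain ⟨j, hj, hj'⟩ := exists_min_image (univ.erase i) g
    (hne _ (by rw [card_erase_of_mem (mem_univ i), card_univ]; omega))
  set B := (univ.erase i).erase j
  obtain ⟨k, hk, hk'⟩ := exists_min_image B g
    (hne _ (by rw [card_erase_of_mem hj, card_erase_of_mem (mem_univ i), card_univ]; omega))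
  obtain ⟨hji, -⟩ := mem_erase.1 hj
  obtain ⟨hkj, hk⟩ := mem_erase.1 hk
  obtain ⟨hki, -⟩ := mem_erase.1 hk
  refine ⟨i, j, k, Ne.symm hji, Ne.symm hki, Ne.symm hkj, ?_⟩
  have hcardB : (B.erase k).card + 3 = Fintype.card ι := by
    rw [card_erase_of_mem (mem_erase.2 ⟨hkj, hk⟩), card_erase_of_mem hj,
      card_erase_of_mem (mem_univ i), card_univ]
    omega
  have hsplit : ∑ m, g m = g i + g j + g k + ∑ m ∈ B.erase k, g m := by
    rw [← add_sum_erase _ _ (mem_univ i), ← add_sum_erase _ _ hj,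
      ← add_sum_erase _ _ (mem_erase.2 ⟨hkj, hk⟩)]
    ring
  have hrest : ((B.erase k).card : ℤ) * g k ≤ ∑ m ∈ B.erase k, g m := by
    simpa using card_nsmul_le_sum (B.erase k) g (g k) fun m hm =>
      hk' m (mem_erase.1 hm).2
  have hij := hi j (mem_univ j)
  have hjk := hj' k hk
  have hcardB' : ((B.erase k).card : ℤ) ≤ 4 := by omega
  by_contra! hnonneg
  rcases le_or_gt 0 (g k) with hk0 | hk0
  · nlinarith
  · nlinarith

end Arithmetic

section Form

variable {r : ℕ}

theorem nformR_comm (x y : Fin (r + 1) → ℝ) : NformR r x y = NformR r y x := by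
  simp only [NformR, mul_comm]

theorem nformR_add_left (x y z : Fin (r + 1) → ℝ) :
    NformR r (x + y) z = NformR r x z + NformR r y z := by
  simp only [NformR, ← sum_add_distrib, Pi.add_apply]
  congr! 1 with i; split_ifs <;> ring

theorem nformR_sub_left (x y z : Fin (r + 1) → ℝ) :
    NformR r (x - y) z = NformR r x z - NformR r y z := by
  simp only [NformR, ← sum_sub_distrib, Pi.sub_apply]
  congr! 1 with i; split_ifs <;> ring

theorem nformR_smul_left (c : ℝ) (x y : Fin (r + 1) → ℝ) :
    NformR r (c • x) y = c * NformR r x y := by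
  simp only [NformR, mul_sum, Pi.smul_apply, smul_eq_mul]
  congr! 1 with i; split_ifs <;> ring

theorem nformR_add_right (x y z : Fin (r + 1) → ℝ) :
    NformR r x (y + z) = NformR r x y + NformR r x z := by
  rw [nformR_comm, nformR_add_left, nformR_comm y, nformR_comm z]

theorem nformR_smul_right (c : ℝ) (x y : Fin (r + 1) → ℝ) :
    NformR r x (c • y) = c * NformR r x y := by
  rw [nformR_comm, nformR_smul_left, nformR_comm y]

theorem nformR_eq_sub_sum (x y : Fin (r + 1) → ℝ) :
    NformR r x y = x 0 * y 0 - ∑ i : Fin r, x i.succ * y i.succ := by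
  simp [NformR, Fin.sum_univ_succ, Fin.succ_ne_zero, sub_eq_add_neg]

theorem nformR_single_left (p : Fin (r + 1)) (y : Fin (r + 1) → ℝ) :
    NformR r (Pi.single p 1) y = if p = 0 then y p else -y p := by
  rw [NformR, sum_eq_single p (fun i _ hi => by simp [hi]) (by simp)]
  simp

theorem nformR_single_single (p q : Fin (r + 1)) :
    NformR r (Pi.single p 1) (Pi.single q 1) =
      if p = q then (if p = 0 then 1 else -1) else 0 := by
  rw [nformR_single_left]
  by_cases hpq : p = q
  · subst hpq; simp
  · simp [hpq]

end Form

section Reflection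

variable {r : ℕ} {b : Fin (r + 1) → ℝ}

theorem nformR_reflectR_reflectR (hb : NformR r b b = -2) (x y : Fin (r + 1) → ℝ) :
    NformR r (reflectR r b x) (reflectR r b y) = NformR r x y := by
  simp only [reflectR, nformR_add_left, nformR_add_right, nformR_smul_left, nformR_smul_right,
    hb, nformR_comm x b]
  ring

theorem reflectR_of_nformR_eq_zero {v : Fin (r + 1) → ℝ} (hv : NformR r b v = 0) :
    reflectR r b v = v := by
  simp [reflectR, hv]

theorem reflectR_reflectR (hb : NformR r b b = -2) (v : Fin (r + 1) → ℝ) :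
    reflectR r b (reflectR r b v) = v := by
  have : NformR r b (reflectR r b v) = -NformR r b v := by
    rw [reflectR, nformR_add_right, nformR_smul_right, hb]; ring
  rw [reflectR, this, reflectR, add_assoc, ← add_smul, add_neg_cancel, zero_smul, add_zero]

theorem reflectR_smul_kvecR_add (hb : b ∈ RootsR r) (c : ℝ) (v : Fin (r + 1) → ℝ) :
    reflectR r b (c • KvecR r + v) = c • KvecR r + reflectR r b v := by
  rw [reflectR, reflectR, nformR_add_right, nformR_smul_right, hb.2.1, mul_zero, zero_add,
    add_assoc]

end Reflection

section Lattice

variable {r : ℕ}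

theorem isIntegralVec_iff_mem_bot {x : Fin (r + 1) → ℝ} :
    IsIntegralVec r x ↔ ∀ i, x i ∈ (⊥ : Subring ℝ) := by
  simp only [IsIntegralVec, Subring.mem_bot, eq_comm]

theorem IsIntegralVec.nformR_mem_bot {x y : Fin (r + 1) → ℝ} (hx : IsIntegralVec r x)
    (hy : IsIntegralVec r y) : NformR r x y ∈ (⊥ : Subring ℝ) := by
  rw [isIntegralVec_iff_mem_bot] at hx hy
  refine Subring.sum_mem _ fun i _ => ?_
  split_ifs
  exacts [mul_mem (hx i) (hy i), neg_mem (mul_mem (hx i) (hy i))]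

theorem IsIntegralVec.reflectR {b v : Fin (r + 1) → ℝ} (hb : IsIntegralVec r b)
    (hv : IsIntegralVec r v) : IsIntegralVec r (reflectR r b v) := by
  have hbv := hb.nformR_mem_bot hv
  rw [isIntegralVec_iff_mem_bot] at hb hv ⊢
  exact fun i => add_mem (hv i) (mul_mem hbv (hb i))

theorem isIntegralVec_single (p : Fin (r + 1)) : IsIntegralVec r (Pi.single p 1) := by
  rw [isIntegralVec_iff_mem_bot]
  intro i
  by_cases h : i = p
  · subst h; simp
  · simp [h]

theorem IsIntegralVec.sub {x y : Fin (r + 1) → ℝ} (hx : IsIntegralVec r x)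
    (hy : IsIntegralVec r y) : IsIntegralVec r (x - y) := by
  rw [isIntegralVec_iff_mem_bot] at hx hy ⊢
  exact fun i => sub_mem (hx i) (hy i)

end Lattice

section Roots

variable {r : ℕ}

theorem nformR_single_sub_single {p q : Fin (r + 1)} (hp : p ≠ 0) (hq : q ≠ 0)
    (y : Fin (r + 1) → ℝ) : NformR r (Pi.single p 1 - Pi.single q 1) y = y q - y p := by
  rw [nformR_sub_left, nformR_single_left, nformR_single_left, if_neg hp, if_neg hq]
  ring

theorem single_sub_single_mem_rootsR {p q : Fin (r + 1)} (hp : p ≠ 0) (hq : q ≠ 0)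
    (hpq : p ≠ q) : Pi.single p 1 - Pi.single q 1 ∈ RootsR r := by
  refine ⟨(isIntegralVec_single p).sub (isIntegralVec_single q), ?_, ?_⟩ <;>
    norm_num [nformR_single_sub_single hp hq, KvecR, hp, hq, hpq, Ne.symm hpq]

/-- The root `h - ℓ_i - ℓ_j - ℓ_k`, whose reflection is the quadratic Cremona transformation. -/
noncomputable def cremonaRoot (r : ℕ) (i j k : Fin (r + 1)) : Fin (r + 1) → ℝ :=
  Pi.single 0 1 - Pi.single i 1 - Pi.single j 1 - Pi.single k 1

variable {i j k : Fin (r + 1)}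

theorem nformR_cremonaRoot (hi : i ≠ 0) (hj : j ≠ 0) (hk : k ≠ 0) (y : Fin (r + 1) → ℝ) :
    NformR r (cremonaRoot r i j k) y = y 0 + y i + y j + y k := by
  simp only [cremonaRoot, nformR_sub_left, nformR_single_left, if_pos, if_neg hi, if_neg hj,
    if_neg hk]
  ring

theorem cremonaRoot_apply_zero (hi : i ≠ 0) (hj : j ≠ 0) (hk : k ≠ 0) :
    cremonaRoot r i j k 0 = 1 := by
  simp [cremonaRoot, Ne.symm hi, Ne.symm hj, Ne.symm hk]

theorem cremonaRoot_mem_rootsR (hi : i ≠ 0) (hj : j ≠ 0) (hk : k ≠ 0) (hij : i ≠ j) (hik : i ≠ k)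
    (hjk : j ≠ k) : cremonaRoot r i j k ∈ RootsR r := by
  have hint : IsIntegralVec r (cremonaRoot r i j k) :=
    (((isIntegralVec_single 0).sub (isIntegralVec_single i)).sub (isIntegralVec_single j)).sub
      (isIntegralVec_single k)
  refine ⟨hint, ?_, ?_⟩ <;> rw [nformR_cremonaRoot hi hj hk]
  · norm_num [KvecR, hi, hj, hk]
  · norm_num [cremonaRoot, hi, hj, hk, Ne.symm hi, Ne.symm hj, Ne.symm hk, hij, hik, hjk,
      Ne.symm hij, Ne.symm hik, Ne.symm hjk]

end Roots

def ExceptionalClasses (r : ℕ) : Set (Fin (r + 1) → ℝ) :=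
  {e | IsIntegralVec r e ∧ NformR r e e = -1 ∧ NformR r e (KvecR r) = -1}

namespace ExceptionalClasses

variable {r : ℕ} {e : Fin (r + 1) → ℝ}

theorem reflectR_mem {b : Fin (r + 1) → ℝ} (hb : b ∈ RootsR r) (he : e ∈ ExceptionalClasses r) :
    reflectR r b e ∈ ExceptionalClasses r := by
  refine ⟨hb.1.reflectR he.1, ?_, ?_⟩
  · rw [nformR_reflectR_reflectR hb.2.2, he.2.1]
  · rw [← reflectR_of_nformR_eq_zero hb.2.1, nformR_reflectR_reflectR hb.2.2, he.2.2]

theorem single_mem {p : Fin (r + 1)} (hp : p ≠ 0) : Pi.single p 1 ∈ ExceptionalClasses r :=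
  ⟨isIntegralVec_single p, by simp [nformR_single_single, hp],
    by simp [nformR_single_left, hp, KvecR]⟩

theorem exists_int_coords (he : e ∈ ExceptionalClasses r) :
    ∃ g : Fin (r + 1) → ℤ, (∀ i, e i = g i) ∧
      ∑ i : Fin r, g i.succ ^ 2 = g 0 ^ 2 + 1 ∧ ∑ i : Fin r, g i.succ = 1 - 3 * g 0 := by
  choose g hg using he.1
  obtain ⟨-, hee, heK⟩ := he
  simp only [nformR_eq_sub_sum, hg, KvecR, Fin.succ_ne_zero, if_true, if_false, mul_one]
    at hee heK
  refine ⟨g, hg, ?_, ?_⟩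
  · have : ((∑ i : Fin r, g i.succ ^ 2 : ℤ) : ℝ) = ((g 0 ^ 2 + 1 : ℤ) : ℝ) := by
      push_cast; simp only [sq]; linarith
    exact_mod_cast this
  · have : ((∑ i : Fin r, g i.succ : ℤ) : ℝ) = ((1 - 3 * g 0 : ℤ) : ℝ) := by
      push_cast; linarith
    exact_mod_cast this

theorem degree_nonneg (h7 : r ≤ 7) (he : e ∈ ExceptionalClasses r) : 0 ≤ e 0 := by
  obtain ⟨g, hg, hsq, hsum⟩ := exists_int_coords he
  rw [hg]
  exact_mod_cast degree_nonneg_of_sum_sq_of_sum (by simpa using h7) hsq hsum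

theorem exists_eq_single_of_degree_eq_zero (he : e ∈ ExceptionalClasses r) (h0 : e 0 = 0) :
    ∃ q : Fin r, e = Pi.single q.succ 1 := by
  obtain ⟨g, hg, hsq, hsum⟩ := exists_int_coords he
  have hg0 : g 0 = 0 := by exact_mod_cast (hg 0).symm.trans h0
  rw [hg0] at hsq hsum
  obtain ⟨q, hq⟩ := exists_eq_single_of_sum_sq_of_sum (g := fun i : Fin r => g i.succ)
    (by simpa using hsq) (by simpa using hsum)
  refine ⟨q, funext fun i => ?_⟩
  refine Fin.cases ?_ (fun i => ?_) i
  · simp [h0, (Fin.succ_ne_zero q).symm]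
  · rw [hg, congrFun hq i]
    by_cases hi : i = q
    · subst hi; simp
    · simp [hi]

theorem exists_reflectR_degree_le (h3 : 3 ≤ r) (h7 : r ≤ 7) (he : e ∈ ExceptionalClasses r)
    (h0 : e 0 ≠ 0) : ∃ b ∈ RootsR r, reflectR r b e 0 ≤ e 0 - 1 := by
  obtain ⟨g, hg, -, hsum⟩ := exists_int_coords he
  have hpos : 1 ≤ g 0 := by
    have h := degree_nonneg h7 he
    rw [hg] at h h0
    have : g 0 ≠ 0 := by exact_mod_cast h0
    have : 0 ≤ g 0 := by exact_mod_cast h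
    omega
  obtain ⟨i, j, k, hij, hik, hjk, hneg⟩ :=
    exists_three_add_neg_of_sum (by simpa using h3) (by simpa using h7) hpos hsum
  have hi := Fin.succ_ne_zero i
  have hj := Fin.succ_ne_zero j
  have hk := Fin.succ_ne_zero k
  refine ⟨cremonaRoot r i.succ j.succ k.succ, cremonaRoot_mem_rootsR hi hj hk
    (Fin.succ_injective _ |>.ne hij) (Fin.succ_injective _ |>.ne hik)
    (Fin.succ_injective _ |>.ne hjk), ?_⟩
  have hneg' : ((g 0 + g i.succ + g j.succ + g k.succ : ℤ) : ℝ) ≤ -1 := by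
    exact_mod_cast Int.le_sub_one_of_lt hneg
  rw [reflectR, Pi.add_apply, Pi.smul_apply, cremonaRoot_apply_zero hi hj hk,
    nformR_cremonaRoot hi hj hk, hg, hg, hg, hg]
  push_cast at hneg' ⊢
  rw [smul_eq_mul, mul_one]
  linarith

end ExceptionalClasses

section WeylOrbit

variable {r : ℕ} {ω : Fin (r + 1) → ℝ}

def IsWeylStable (r : ℕ) (S : Set (Fin (r + 1) → ℝ)) : Prop :=
  ∀ b ∈ RootsR r, ∀ v ∈ S, reflectR r b v ∈ S

theorem wOrbit_subset {S : Set (Fin (r + 1) → ℝ)} (hω : ω ∈ S) (hS : IsWeylStable r S) :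
    WOrbit r ω ⊆ S :=
  Set.sInter_subset_of_mem ⟨hω, hS⟩

theorem mem_wOrbit_self : ω ∈ WOrbit r ω :=
  Set.mem_sInter.2 fun _ hS => hS.1

theorem isWeylStable_wOrbit : IsWeylStable r (WOrbit r ω) :=
  fun b hb v hv => Set.mem_sInter.2 fun S hS => hS.2 b hb v (hv S hS)

theorem image_wOrbit {f : (Fin (r + 1) → ℝ) → Fin (r + 1) → ℝ}
    (hf : ∀ b ∈ RootsR r, ∀ v, f (reflectR r b v) = reflectR r b (f v)) :
    f '' WOrbit r ω = WOrbit r (f ω) := by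
  refine subset_antisymm (Set.image_subset_iff.2 <| wOrbit_subset mem_wOrbit_self ?_)
    (wOrbit_subset (Set.mem_image_of_mem f mem_wOrbit_self) ?_)
  · intro b hb v hv
    simpa only [Set.mem_preimage, hf b hb] using isWeylStable_wOrbit b hb _ hv
  · rintro b hb _ ⟨v, hv, rfl⟩
    exact ⟨reflectR r b v, isWeylStable_wOrbit b hb v hv, hf b hb v⟩

theorem single_mem_wOrbit_single {p q : Fin (r + 1)} (hp : p ≠ 0) (hq : q ≠ 0) :
    Pi.single q 1 ∈ WOrbit r (Pi.single p 1) := by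
  by_cases hpq : p = q
  · subst hpq; exact mem_wOrbit_self
  have hrefl : reflectR r (Pi.single p 1 - Pi.single q 1) (Pi.single p 1) = Pi.single q 1 := by
    rw [reflectR, nformR_single_sub_single hp hq]
    simp [Ne.symm hpq]
  rw [← hrefl]
  exact isWeylStable_wOrbit _ (single_sub_single_mem_rootsR hp hq hpq) _ mem_wOrbit_self

theorem exceptionalClasses_eq_wOrbit (h3 : 3 ≤ r) (h7 : r ≤ 7) {p : Fin (r + 1)} (hp : p ≠ 0) :
    ExceptionalClasses r = WOrbit r (Pi.single p 1) := by
  refine subset_antisymm (fun e he => ?_) (wOrbit_subset (ExceptionalClasses.single_mem hp)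
    fun b hb v hv => ExceptionalClasses.reflectR_mem hb hv)
  suffices ∀ n : ℕ, ∀ e ∈ ExceptionalClasses r, e 0 < n → e ∈ WOrbit r (Pi.single p 1) from
    this (⌊e 0⌋₊ + 1) e he (by exact_mod_cast Nat.lt_floor_add_one (e 0))
  intro n
  induction n with
  | zero =>
    exact fun e he hn => absurd (ExceptionalClasses.degree_nonneg h7 he) (by simpa using hn)
  | succ n ih =>
    intro e he hn
    by_cases h0 : e 0 = 0
    · obtain ⟨q, rfl⟩ := ExceptionalClasses.exists_eq_single_of_degree_eq_zero he h0
      exact single_mem_wOrbit_single hp (Fin.succ_ne_zero q)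
    obtain ⟨b, hb, hle⟩ := ExceptionalClasses.exists_reflectR_degree_le h3 h7 he h0
    rw [← reflectR_reflectR hb.2.2 e]
    refine isWeylStable_wOrbit b hb _ (ih _ (ExceptionalClasses.reflectR_mem hb he) ?_)
    push_cast at hn
    linarith

end WeylOrbit

/-- Under `N_r ⊗ ℝ = ℝK_r ⊕ (K_r^⊥ ⊗ ℝ)`, the exceptional classes of `N_r` are
exactly the elements `-(1/d)K_r + x` with `x ∈ Wω`, `d = 9 - r`. -/
theorem exceptional_classes_eq_orbit (r : ℕ) (h4 : 4 ≤ r) (h7 : r ≤ 7) :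
    {e : Fin (r + 1) → ℝ | IsIntegralVec r e ∧
        NformR r e e = -1 ∧ NformR r e (KvecR r) = -1} =
      (fun x => (-(1 / (9 - (r : ℝ)))) • KvecR r + x) '' WOrbit r (omegaR r) := by
  have hlast : Fin.last r ≠ 0 := Fin.ext_iff.not.2 (by rw [Fin.val_last, Fin.val_zero]; omega)
  have hω : (-(1 / (9 - (r : ℝ)))) • KvecR r + omegaR r = Pi.single (Fin.last r) 1 := by
    ext i
    simp only [omegaR, Pi.add_apply, Pi.smul_apply, smul_eq_mul, Pi.single_apply]
    ring
  rw [image_wOrbit fun b hb v => (reflectR_smul_kvecR_add hb _ v).symm, hω]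
  exact exceptionalClasses_eq_wOrbit (by omega) h7 hlast
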